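/- Let L > 0 and α, β be real numbers, and let ψ, p : ℝ × [0,L] → ℝ be twice continuously differentiable (jointly in (t,x)). Assume that for every t and all continuously differentiable test functions η, q : [0,L] → ℝ the weak formulation holds: ∫₀ᴸ (1 − 2β p(t,x)) ∂ₜp(t,x) η(x) dx + α ∫₀ᴸ ∂ₓ∂ₜψ(t,x) η'(x) dx = − ∫₀ᴸ ∂ₓψ(t,x) η'(x) dx and ∫₀ᴸ (1 − 2β p(t,x)) ∂ₜψ(t,x) q(x) dx = ∫₀ᴸ (1 − 2β p(t,x)) p(t,x) q(x) dx. Then for every t, the function t ↦ E(ψ(t,·), p(t,·)) = ∫₀ᴸ ½ (∂ₓψ(t,x))² + (½ − (2β/3) p(t,x)) p(t,x)² dx is differentiable with derivative equal to −α ∫₀ᴸ (∂ₓ∂ₜψ(t,x))² dx. -/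

import Mathlib

open MeasureTheory intervalIntegral

/-!
Differentiating under the integral sign, `d/dt E = ∫ ∂ₓψ ∂ₓ∂ₜψ + (1 - 2βp) p ∂ₜp`, where the
first term uses the symmetry `∂ₜ∂ₓψ = ∂ₓ∂ₜψ` of mixed partials. Testing the second weak equation
with the `C¹` function `q = ∂ₜp` turns the second integral into `∫ (1 - 2βp) ∂ₜp ∂ₜψ`, and testing
the first one with `η = ∂ₜψ` identifies the sum with `-α ∫ (∂ₓ∂ₜψ)²`.
-/

/-- Partial derivative in time of a function `f : ℝ × ℝ → ℝ`. -/
noncomputable def Dt (f : ℝ × ℝ → ℝ) (u : ℝ × ℝ) : ℝ :=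
  deriv (fun s => f (s, u.2)) u.1

/-- Partial derivative in space of a function `f : ℝ × ℝ → ℝ`. -/
noncomputable def Dx (f : ℝ × ℝ → ℝ) (u : ℝ × ℝ) : ℝ :=
  deriv (fun y => f (u.1, y)) u.2

section PartialDerivatives

variable {E : Type*} [NormedAddCommGroup E] [NormedSpace ℝ E]

theorem hasDerivAt_comp_prodMk_left {g : ℝ × ℝ → E} {t x : ℝ} (hg : DifferentiableAt ℝ g (t, x)) :
    HasDerivAt (fun s => g (s, x)) (fderiv ℝ g (t, x) (1, 0)) t :=
  hg.hasFDerivAt.comp_hasDerivAt t ((hasDerivAt_id t).prodMk (hasDerivAt_const t x))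

theorem hasDerivAt_comp_prodMk_right {g : ℝ × ℝ → E} {t x : ℝ} (hg : DifferentiableAt ℝ g (t, x)) :
    HasDerivAt (fun y => g (t, y)) (fderiv ℝ g (t, x) (0, 1)) x :=
  hg.hasFDerivAt.comp_hasDerivAt x ((hasDerivAt_const x t).prodMk (hasDerivAt_id x))

variable {f : ℝ × ℝ → ℝ}

theorem Dt_eq_fderiv {u : ℝ × ℝ} (hf : DifferentiableAt ℝ f u) : Dt f u = fderiv ℝ f u (1, 0) :=
  (hasDerivAt_comp_prodMk_left hf).deriv

theorem Dx_eq_fderiv {u : ℝ × ℝ} (hf : DifferentiableAt ℝ f u) : Dx f u = fderiv ℝ f u (0, 1) :=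
  (hasDerivAt_comp_prodMk_right hf).deriv

theorem Dt_eq_fderiv_apply (hf : Differentiable ℝ f) : Dt f = fun u => fderiv ℝ f u (1, 0) :=
  funext fun u => Dt_eq_fderiv (hf u)

theorem Dx_eq_fderiv_apply (hf : Differentiable ℝ f) : Dx f = fun u => fderiv ℝ f u (0, 1) :=
  funext fun u => Dx_eq_fderiv (hf u)

theorem hasDerivAt_Dt {t x : ℝ} (hf : DifferentiableAt ℝ f (t, x)) :
    HasDerivAt (fun s => f (s, x)) (Dt f (t, x)) t := by
  rw [Dt_eq_fderiv hf]
  exact hasDerivAt_comp_prodMk_left hf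

theorem contDiff_Dt {n : WithTop ℕ∞} (hf : ContDiff ℝ (n + 1) f) : ContDiff ℝ n (Dt f) := by
  rw [Dt_eq_fderiv_apply (hf.differentiable (by simp))]
  exact (hf.fderiv_right le_rfl).clm_apply contDiff_const

theorem contDiff_Dx {n : WithTop ℕ∞} (hf : ContDiff ℝ (n + 1) f) : ContDiff ℝ n (Dx f) := by
  rw [Dx_eq_fderiv_apply (hf.differentiable (by simp))]
  exact (hf.fderiv_right le_rfl).clm_apply contDiff_const

theorem Dt_Dx_eq_Dx_Dt (hf : ContDiff ℝ 2 f) : Dt (Dx f) = Dx (Dt f) := by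
  funext u
  have hf' : Differentiable ℝ f := hf.differentiable two_ne_zero
  have hf'' : Differentiable ℝ (fderiv ℝ f) :=
    (hf.fderiv_right (m := 1) le_rfl).differentiable one_ne_zero
  rw [Dt_eq_fderiv ((contDiff_Dx (n := 1) hf).differentiable one_ne_zero u),
    Dx_eq_fderiv ((contDiff_Dt (n := 1) hf).differentiable one_ne_zero u),
    Dx_eq_fderiv_apply hf', Dt_eq_fderiv_apply hf',
    fderiv_clm_apply (hf'' u) (differentiableAt_const _),
    fderiv_clm_apply (hf'' u) (differentiableAt_const _)]
  simpa using hf.contDiffAt.isSymmSndFDerivAt (by simp) (1, 0) (0, 1)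

theorem hasDerivAt_Dx {t x : ℝ} (hf : ContDiff ℝ 2 f) :
    HasDerivAt (fun s => Dx f (s, x)) (Dx (Dt f) (t, x)) t := by
  rw [← Dt_Dx_eq_Dx_Dt hf]
  exact hasDerivAt_Dt ((contDiff_Dx (n := 1) hf).differentiable one_ne_zero _)

end PartialDerivatives

theorem hasDerivAt_intervalIntegral_of_continuous {E : Type*} [NormedAddCommGroup E]
    [NormedSpace ℝ E] {F F' : ℝ × ℝ → E} (hF : Continuous F) (hF' : Continuous F')
    (hderiv : ∀ s x, HasDerivAt (fun s => F (s, x)) (F' (s, x)) s) (a b t : ℝ) :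
    HasDerivAt (fun s => ∫ x in a..b, F (s, x)) (∫ x in a..b, F' (t, x)) t := by
  obtain ⟨C, hC⟩ := ((isCompact_closedBall t 1).prod isCompact_uIcc).exists_bound_of_continuousOn
    hF'.continuousOn
  refine (hasDerivAt_integral_of_dominated_loc_of_deriv_le (Metric.closedBall_mem_nhds t one_pos)
    (.of_forall fun s => (hF.comp (.prodMk_right s)).aestronglyMeasurable)
    ((hF.comp (.prodMk_right t)).intervalIntegrable a b)
    (hF'.comp (.prodMk_right t)).aestronglyMeasurable
    (.of_forall fun x hx s hs => hC (s, x) ⟨hs, Set.uIoc_subset_uIcc hx⟩)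
    intervalIntegrable_const (.of_forall fun x _ s _ => hderiv s x)).2

section Energy

variable (β : ℝ) (ψ p : ℝ × ℝ → ℝ)

noncomputable def energyDensity (u : ℝ × ℝ) : ℝ :=
  1 / 2 * Dx ψ u ^ 2 + (1 / 2 - 2 * β / 3 * p u) * p u ^ 2

noncomputable def energyDensityRate (u : ℝ × ℝ) : ℝ :=
  Dx ψ u * Dx (Dt ψ) u + (1 - 2 * β * p u) * p u * Dt p u

variable {β ψ p}

theorem continuous_energyDensity (hψ : ContDiff ℝ 1 ψ) (hp : Continuous p) :
    Continuous (energyDensity β ψ p) := by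
  have := (contDiff_Dx (n := 0) hψ).continuous
  unfold energyDensity
  fun_prop

theorem continuous_energyDensityRate (hψ : ContDiff ℝ 2 ψ) (hp : ContDiff ℝ 1 p) :
    Continuous (energyDensityRate β ψ p) := by
  have hDxψ := (contDiff_Dx (n := 1) hψ).continuous
  have hDxDtψ := (contDiff_Dx (n := 0) (contDiff_Dt (n := 1) hψ)).continuous
  have hDtp := (contDiff_Dt (n := 0) hp).continuous
  have hp₀ := hp.continuous
  unfold energyDensityRate
  fun_prop

theorem hasDerivAt_energyDensity (hψ : ContDiff ℝ 2 ψ) (hp : Differentiable ℝ p) (s x : ℝ) :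
    HasDerivAt (fun s => energyDensity β ψ p (s, x)) (energyDensityRate β ψ p (s, x)) s := by
  have hDx := hasDerivAt_Dx (t := s) (x := x) hψ
  have hP := hasDerivAt_Dt (hp (s, x))
  refine (((hDx.pow 2).const_mul (1 / 2)).add
    (((hasDerivAt_const s (1 / 2)).sub (hP.const_mul (2 * β / 3))).mul (hP.pow 2))).congr_deriv ?_
  simp only [energyDensityRate, Pi.pow_apply, Pi.sub_apply]
  ring

theorem integral_energyDensityRate_eq (hψ : ContDiff ℝ 2 ψ) (hp : ContDiff ℝ 1 p) {α a b t : ℝ}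
    (hη : (∫ x in a..b, (1 - 2 * β * p (t, x)) * Dt p (t, x) * Dt ψ (t, x))
        + α * ∫ x in a..b, Dx (Dt ψ) (t, x) * Dx (Dt ψ) (t, x)
      = -∫ x in a..b, Dx ψ (t, x) * Dx (Dt ψ) (t, x))
    (hq : ∫ x in a..b, (1 - 2 * β * p (t, x)) * Dt ψ (t, x) * Dt p (t, x)
      = ∫ x in a..b, (1 - 2 * β * p (t, x)) * p (t, x) * Dt p (t, x)) :
    ∫ x in a..b, energyDensityRate β ψ p (t, x) = -α * ∫ x in a..b, Dx (Dt ψ) (t, x) ^ 2 := by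
  have hDxψ := (contDiff_Dx (n := 1) hψ).continuous
  have hDxDtψ := (contDiff_Dx (n := 0) (contDiff_Dt (n := 1) hψ)).continuous
  have hDtp := (contDiff_Dt (n := 0) hp).continuous
  have hp₀ := hp.continuous
  have hsplit : ∫ x in a..b, energyDensityRate β ψ p (t, x)
      = (∫ x in a..b, Dx ψ (t, x) * Dx (Dt ψ) (t, x))
        + ∫ x in a..b, (1 - 2 * β * p (t, x)) * p (t, x) * Dt p (t, x) :=
    integral_add (Continuous.intervalIntegrable (by fun_prop) a b)
      (Continuous.intervalIntegrable (by fun_prop) a b)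
  have hswap : ∫ x in a..b, (1 - 2 * β * p (t, x)) * Dt p (t, x) * Dt ψ (t, x)
      = ∫ x in a..b, (1 - 2 * β * p (t, x)) * Dt ψ (t, x) * Dt p (t, x) :=
    integral_congr fun x _ => by ring
  simp only [sq]
  linarith

end Energy

theorem westervelt_energy_identity (L α β : ℝ)
    (ψ p : ℝ × ℝ → ℝ) (hψ : ContDiff ℝ 2 ψ) (hp : ContDiff ℝ 2 p)
    (hweak1 : ∀ t : ℝ, ∀ η : ℝ → ℝ, ContDiff ℝ 1 η →
      (∫ x in (0 : ℝ)..L, (1 - 2 * β * p (t, x)) * Dt p (t, x) * η x)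
          + α * ∫ x in (0 : ℝ)..L, Dx (Dt ψ) (t, x) * deriv η x
        = - ∫ x in (0 : ℝ)..L, Dx ψ (t, x) * deriv η x)
    (hweak2 : ∀ t : ℝ, ∀ q : ℝ → ℝ, ContDiff ℝ 1 q →
      (∫ x in (0 : ℝ)..L, (1 - 2 * β * p (t, x)) * Dt ψ (t, x) * q x)
        = ∫ x in (0 : ℝ)..L, (1 - 2 * β * p (t, x)) * p (t, x) * q x) :
    ∀ t : ℝ, HasDerivAt (fun s : ℝ => ∫ x in (0 : ℝ)..L,
        (1 / 2) * (Dx ψ (s, x)) ^ 2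
          + (1 / 2 - (2 * β / 3) * p (s, x)) * (p (s, x)) ^ 2)
      (-α * ∫ x in (0 : ℝ)..L, (Dx (Dt ψ) (t, x)) ^ 2) t := by
  intro t
  have hp₁ : ContDiff ℝ 1 p := hp.of_le one_le_two
  have hη : ContDiff ℝ 1 fun x => Dt ψ (t, x) :=
    (contDiff_Dt (n := 1) hψ).comp (contDiff_const.prodMk contDiff_id)
  have hq : ContDiff ℝ 1 fun x => Dt p (t, x) :=
    (contDiff_Dt (n := 1) hp).comp (contDiff_const.prodMk contDiff_id)
  rw [← integral_energyDensityRate_eq hψ hp₁ (hweak1 t _ hη) (hweak2 t _ hq)]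
  exact hasDerivAt_intervalIntegral_of_continuous (continuous_energyDensity (hψ.of_le one_le_two)
    hp.continuous) (continuous_energyDensityRate hψ hp₁)
    (hasDerivAt_energyDensity hψ (hp.differentiable two_ne_zero)) 0 L t
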